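/- Let g be a random vector in ℝ^d with ‖E[g]‖ ≤ L and E[‖g - E[g]‖^p] ≤ σ^p for some p ∈ (1,2]. Let ĝ = min{1, τ/‖g‖}·g (with ĝ = 0 if g = 0) for clipping parameter τ > 0. Then E[‖ĝ‖^2] ≤ 2^{p-1} τ^{2-p} (σ^p + L^p). -/

import Mathlib

open Classical

open MeasureTheory

/-- The clipping operator: clip(v, τ) = min{1, τ/‖v‖}·v for v ≠ 0, and 0 for v = 0. -/
noncomputable def clip {d : ℕ} (τ : ℝ) (v : EuclideanSpace ℝ (Fin d)) :
    EuclideanSpace ℝ (Fin d) :=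
  if v = 0 then 0 else (min 1 (τ / ‖v‖)) • v

/-!
Clipping caps the norm at `τ`, so `‖clip τ g‖² = min(‖g‖, τ)² ≤ τ^(2-p) ‖g‖^p`. Splitting
`g = (g - E g) + E g` and using convexity of `t ↦ t^p` gives
`‖g‖^p ≤ 2^(p-1) (‖g - E g‖^p + ‖E g‖^p)`; taking expectations yields the bound.
-/

theorem Real.add_rpow_le_two_rpow_sub_one_mul {a b p : ℝ} (ha : 0 ≤ a) (hb : 0 ≤ b)
    (hp : 1 ≤ p) : (a + b) ^ p ≤ 2 ^ (p - 1) * (a ^ p + b ^ p) := by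
  lift a to NNReal using ha
  lift b to NNReal using hb
  exact_mod_cast NNReal.rpow_add_le_mul_rpow_add_rpow a b hp

theorem norm_rpow_le_two_rpow_sub_one_mul {E : Type*} [SeminormedAddCommGroup E] (x m : E)
    {p : ℝ} (hp : 1 ≤ p) : ‖x‖ ^ p ≤ 2 ^ (p - 1) * (‖x - m‖ ^ p + ‖m‖ ^ p) :=
  calc ‖x‖ ^ p ≤ (‖x - m‖ + ‖m‖) ^ p :=
        Real.rpow_le_rpow (norm_nonneg _) (norm_le_norm_sub_add x m) (by linarith)
    _ ≤ 2 ^ (p - 1) * (‖x - m‖ ^ p + ‖m‖ ^ p) :=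
        Real.add_rpow_le_two_rpow_sub_one_mul (norm_nonneg _) (norm_nonneg _) hp

theorem min_sq_le_rpow_mul_rpow {a τ p : ℝ} (ha : 0 ≤ a) (hτ : 0 ≤ τ) (hp0 : 0 ≤ p)
    (hp2 : p ≤ 2) : min a τ ^ 2 ≤ τ ^ (2 - p) * a ^ p := by
  have hs : 0 ≤ min a τ := le_min ha hτ
  calc min a τ ^ 2 = min a τ ^ (2 - p + p) := by
        rw [sub_add_cancel, Real.rpow_two]
    _ = min a τ ^ (2 - p) * min a τ ^ p := Real.rpow_add' hs (by norm_num)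
    _ ≤ τ ^ (2 - p) * a ^ p := by
        gcongr
        · exact min_le_right a τ
        · exact min_le_left a τ

theorem norm_clip {d : ℕ} {τ : ℝ} (hτ : 0 ≤ τ) (v : EuclideanSpace ℝ (Fin d)) :
    ‖clip τ v‖ = min ‖v‖ τ := by
  unfold clip
  split_ifs with h
  · simp [h, hτ]
  · have hv : 0 < ‖v‖ := norm_pos_iff.mpr h
    rw [norm_smul, Real.norm_of_nonneg (le_min zero_le_one (by positivity)),
      min_mul_of_nonneg _ _ hv.le, one_mul, div_mul_cancel₀ _ hv.ne', min_comm]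

theorem norm_clip_sq_le_two_rpow_sub_one_mul {d : ℕ} {τ p : ℝ} (hτ : 0 ≤ τ) (hp1 : 1 ≤ p)
    (hp2 : p ≤ 2) (v m : EuclideanSpace ℝ (Fin d)) :
    ‖clip τ v‖ ^ 2 ≤ 2 ^ (p - 1) * τ ^ (2 - p) * (‖v - m‖ ^ p + ‖m‖ ^ p) :=
  calc ‖clip τ v‖ ^ 2 ≤ τ ^ (2 - p) * ‖v‖ ^ p := by
        rw [norm_clip hτ]
        exact min_sq_le_rpow_mul_rpow (norm_nonneg v) hτ (by linarith) hp2
    _ ≤ τ ^ (2 - p) * (2 ^ (p - 1) * (‖v - m‖ ^ p + ‖m‖ ^ p)) := by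
        gcongr
        exact norm_rpow_le_two_rpow_sub_one_mul v m hp1
    _ = 2 ^ (p - 1) * τ ^ (2 - p) * (‖v - m‖ ^ p + ‖m‖ ^ p) := by ring

theorem stmt4_general {d : ℕ} {Ω : Type*} [MeasurableSpace Ω]
    (μ : Measure Ω) [IsProbabilityMeasure μ]
    (g : Ω → EuclideanSpace ℝ (Fin d))
    (L σ τ p : ℝ) (hp1 : 1 < p) (hp2 : p ≤ 2)
    (hτ : 0 < τ)
    (hmean : ‖∫ ω, g ω ∂μ‖ ≤ L)
    (hmomInt : Integrable (fun ω => ‖g ω - ∫ ω', g ω' ∂μ‖ ^ p) μ)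
    (hmom : ∫ ω, ‖g ω - ∫ ω', g ω' ∂μ‖ ^ p ∂μ ≤ σ ^ p) :
    ∫ ω, ‖clip τ (g ω)‖ ^ 2 ∂μ ≤ 2 ^ (p - 1) * τ ^ (2 - p) * (σ ^ p + L ^ p) := by
  set m := ∫ ω', g ω' ∂μ
  have hpointwise (ω : Ω) :
      ‖clip τ (g ω)‖ ^ 2 ≤ 2 ^ (p - 1) * τ ^ (2 - p) * (‖g ω - m‖ ^ p + L ^ p) := by
    refine (norm_clip_sq_le_two_rpow_sub_one_mul hτ.le hp1.le hp2 (g ω) m).trans ?_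
    gcongr
  calc ∫ ω, ‖clip τ (g ω)‖ ^ 2 ∂μ
      ≤ ∫ ω, 2 ^ (p - 1) * τ ^ (2 - p) * (‖g ω - m‖ ^ p + L ^ p) ∂μ :=
        integral_mono_of_nonneg (ae_of_all _ fun _ => sq_nonneg _)
          ((hmomInt.add (integrable_const _)).const_mul _) (ae_of_all _ hpointwise)
    _ = 2 ^ (p - 1) * τ ^ (2 - p) * ((∫ ω, ‖g ω - m‖ ^ p ∂μ) + L ^ p) := by
        rw [integral_const_mul, integral_add hmomInt (integrable_const _), integral_const,
          probReal_univ, one_smul]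
    _ ≤ 2 ^ (p - 1) * τ ^ (2 - p) * (σ ^ p + L ^ p) := by
        gcongr

/-- Second-moment bound for the clipped random vector:
E[‖ĝ‖²] ≤ 2^{p-1} τ^{2-p} (σ^p + L^p). -/
theorem stmt4 {d : ℕ} {Ω : Type*} [MeasurableSpace Ω]
    (μ : Measure Ω) [IsProbabilityMeasure μ]
    (g : Ω → EuclideanSpace ℝ (Fin d)) (hg : Integrable g μ)
    (L σ τ p : ℝ) (hp1 : 1 < p) (hp2 : p ≤ 2)
    (hL : 0 < L) (hσ : 0 < σ) (hτ : 0 < τ)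
    (hmean : ‖∫ ω, g ω ∂μ‖ ≤ L)
    (hmomInt : Integrable (fun ω => ‖g ω - ∫ ω', g ω' ∂μ‖ ^ p) μ)
    (hmom : ∫ ω, ‖g ω - ∫ ω', g ω' ∂μ‖ ^ p ∂μ ≤ σ ^ p) :
    ∫ ω, ‖clip τ (g ω)‖ ^ 2 ∂μ ≤ 2 ^ (p - 1) * τ ^ (2 - p) * (σ ^ p + L ^ p) :=
  stmt4_general μ g L σ τ p hp1 hp2 hτ hmean hmomInt hmom
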